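/- arXiv:1605.06872 — 4 statements merged into one kernel-verified Lean document; each statement's English description precedes it below -/
import Mathlib

section
/- Let α = 1, ρ ∈ (0,1), and let μ be a probability measure on ℝ whose characteristic function satisfies ∫_ℝ exp(izx) dμ(x) = exp(−Ψ(z)) for all z ∈ ℝ, where Ψ is the characteristic exponent with parameters (1, ρ). Then ∫_ℝ |x|^{−1} dμ(x) = ∞. -/
open MeasureTheory Filter Real
open scoped ENNReal

/-- The characteristic exponent of a stable process with parameters `(α, ρ)`:
`Ψ(z) = |z|^α exp(iπα(1/2 − ρ))` for `z ≥ 0` and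
`Ψ(z) = |z|^α exp(−iπα(1/2 − ρ̂))` for `z < 0`, where `ρ̂ = 1 − ρ`. -/
noncomputable def stableExponent (α ρ : ℝ) (z : ℝ) : ℂ :=
  if 0 ≤ z then
    ((|z| ^ α : ℝ) : ℂ) * Complex.exp (Complex.I * Real.pi * α * (1 / 2 - ρ))
  else
    ((|z| ^ α : ℝ) : ℂ) * Complex.exp (-(Complex.I * Real.pi * α * (1 / 2 - (1 - ρ))))

open scoped Topology
open Complex (I)

/-!
Laplace-transforming the characteristic function `φ(t) = exp (-t c)`, `t ≥ 0`, where
`c = exp (iπ(1/2 - ρ))` has positive real part, gives for `ε > 0` the resolvent identity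
`∫ (ε - i x)⁻¹ dμ(x) = ∫₀^∞ e^{-εt} φ(t) dt = (ε + c)⁻¹`.
If `∫ |x|⁻¹ dμ` were finite, dominated convergence (`|ε - i x|⁻¹ ≤ |x|⁻¹`) would let `ε ↓ 0`
on the left, with the purely imaginary limit `i ∫ x⁻¹ dμ`, while the right side tends to `c⁻¹`,
whose real part is positive.
-/

theorem integral_Ioi_exp_neg_mul_mul_charFun (μ : Measure ℝ) [IsFiniteMeasure μ] {ε : ℝ} (hε : 0 < ε) :
    ∫ t : ℝ in Set.Ioi 0, Complex.exp (-(ε * t)) * charFun μ t = ∫ x, ((ε : ℂ) - x * I)⁻¹ ∂μ := by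
  have hexp : ∀ x t : ℝ, Complex.exp (-(ε * t)) * Complex.exp (t * x * I)
      = Complex.exp ((-ε + x * I) * t) := by
    intro x t; rw [← Complex.exp_add]; ring_nf
  have hre : ∀ x : ℝ, (-ε + x * I : ℂ).re < 0 := by intro x; simpa using hε
  have hint : Integrable (Function.uncurry fun (x t : ℝ) => Complex.exp ((-ε + x * I) * t))
      (μ.prod (volume.restrict (Set.Ioi 0))) := by
    refine Integrable.mono' ((integrableOn_exp_mul_Ioi (neg_lt_zero.2 hε) 0).comp_snd μ) ?_ ?_
    · fun_prop
    · refine .of_forall fun ⟨x, t⟩ => ?_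
      simp [Complex.norm_exp]
  calc ∫ t : ℝ in Set.Ioi 0, Complex.exp (-(ε * t)) * charFun μ t
      = ∫ t : ℝ in Set.Ioi 0, ∫ x, Complex.exp ((-ε + x * I) * t) ∂μ := by
        simp only [charFun_apply_real, ← integral_const_mul, hexp]
    _ = ∫ x, (∫ t : ℝ in Set.Ioi 0, Complex.exp ((-ε + x * I) * t)) ∂μ :=
        (integral_integral_swap hint).symm
    _ = ∫ x, ((ε : ℂ) - x * I)⁻¹ ∂μ := by
        refine integral_congr_ae (.of_forall fun x => ?_)
        simp only [integral_exp_mul_complex_Ioi (hre x), Complex.ofReal_zero, mul_zero,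
          Complex.exp_zero]
        rw [neg_div, ← div_neg, one_div]; ring_nf

theorem integrable_inv_abs_of_lintegral_ne_top {μ : Measure ℝ}
    (h : ∫⁻ x, (ENNReal.ofReal |x|)⁻¹ ∂μ ≠ ⊤) : Integrable (fun x : ℝ => |x|⁻¹) μ := by
  refine ⟨by fun_prop, ?_⟩
  rw [hasFiniteIntegral_iff_ofReal (.of_forall fun x => by positivity)]
  exact (lintegral_mono fun x => ENNReal.ofReal_inv_le).trans_lt h.lt_top

theorem ae_ne_zero_of_lintegral_inv_abs_ne_top {μ : Measure ℝ}
    (h : ∫⁻ x, (ENNReal.ofReal |x|)⁻¹ ∂μ ≠ ⊤) : ∀ᵐ x ∂μ, x ≠ 0 := by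
  filter_upwards [ae_lt_top (by fun_prop) h] with x hx
  rintro rfl
  simp at hx

theorem norm_inv_ofReal_sub_mul_I_le {ε x : ℝ} (hx : x ≠ 0) :
    ‖((ε : ℂ) - x * I)⁻¹‖ ≤ |x|⁻¹ := by
  rw [norm_inv]
  refine inv_anti₀ (abs_pos.2 hx) ?_
  simpa using Complex.abs_im_le_norm ((ε : ℂ) - x * I)

theorem tendsto_integral_inv_ofReal_sub_mul_I {μ : Measure ℝ}
    (h : ∫⁻ x, (ENNReal.ofReal |x|)⁻¹ ∂μ ≠ ⊤) :
    Tendsto (fun ε : ℝ => ∫ x, ((ε : ℂ) - x * I)⁻¹ ∂μ) (𝓝[>] 0)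
      (𝓝 ((∫ x, x⁻¹ ∂μ : ℝ) * I)) := by
  have hae := ae_ne_zero_of_lintegral_inv_abs_ne_top h
  have hlim : (∫ x, x⁻¹ ∂μ : ℝ) * I = ∫ x, ((0 : ℝ) - x * I : ℂ)⁻¹ ∂μ := by
    rw [← integral_complex_ofReal, ← integral_mul_const]
    refine integral_congr_ae (.of_forall fun x => ?_)
    simp only [Complex.ofReal_zero, zero_sub, Complex.ofReal_inv, mul_inv, inv_neg,
      Complex.inv_I]
    ring
  rw [hlim]
  refine tendsto_integral_filter_of_dominated_convergence _ (.of_forall fun ε => by fun_prop)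
    (.of_forall fun ε => ?_) (integrable_inv_abs_of_lintegral_ne_top h) ?_
  · filter_upwards [hae] with x hx using norm_inv_ofReal_sub_mul_I_le hx
  · filter_upwards [hae] with x hx
    refine (ContinuousAt.tendsto ?_).mono_left nhdsWithin_le_nhds
    refine ((Complex.continuous_ofReal.sub continuous_const).continuousAt).inv₀ ?_
    simpa [sub_eq_zero, Complex.ext_iff] using hx

theorem integral_Ioi_exp_neg_mul_mul_exp_neg_mul {c : ℂ} (hc : 0 < c.re) {ε : ℝ} (hε : 0 ≤ ε) :
    ∫ t : ℝ in Set.Ioi 0, Complex.exp (-(ε * t)) * Complex.exp (-(t * c)) = (ε + c)⁻¹ := by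
  have hre : (-(ε + c)).re < 0 := by simp; linarith
  calc ∫ t : ℝ in Set.Ioi 0, Complex.exp (-(ε * t)) * Complex.exp (-(t * c))
      = ∫ t : ℝ in Set.Ioi 0, Complex.exp (-(ε + c) * t) := by
        congr 1 with t; rw [← Complex.exp_add]; ring_nf
    _ = (ε + c)⁻¹ := by
        rw [integral_exp_mul_complex_Ioi hre]
        simp only [Complex.ofReal_zero, mul_zero, Complex.exp_zero, neg_div_neg_eq, one_div]

theorem lintegral_inv_abs_eq_top_of_charFun_eq_exp {μ : Measure ℝ} [IsFiniteMeasure μ] {c : ℂ}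
    (hc : 0 < c.re) (hμ : ∀ t : ℝ, 0 ≤ t → charFun μ t = Complex.exp (-(t * c))) :
    ∫⁻ x, (ENNReal.ofReal |x|)⁻¹ ∂μ = ⊤ := by
  by_contra h
  have hresolvent : ∀ ε : ℝ, 0 < ε → ∫ x, ((ε : ℂ) - x * I)⁻¹ ∂μ = (ε + c)⁻¹ := by
    intro ε hε
    rw [← integral_Ioi_exp_neg_mul_mul_charFun μ hε, ← integral_Ioi_exp_neg_mul_mul_exp_neg_mul hc hε.le]
    exact setIntegral_congr_fun measurableSet_Ioi fun t ht => by rw [hμ t (le_of_lt ht)]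
  have hc0 : c ≠ 0 := fun h0 => by simp [h0] at hc
  have hlim : Tendsto (fun ε : ℝ => ((ε : ℂ) + c)⁻¹) (𝓝[>] 0) (𝓝 c⁻¹) := by
    have : ContinuousAt (fun ε : ℝ => ((ε : ℂ) + c)⁻¹) 0 :=
      (Complex.continuous_ofReal.add continuous_const).continuousAt.inv₀ (by simpa using hc0)
    simpa using this.tendsto.mono_left nhdsWithin_le_nhds
  have hinv : c⁻¹ = (∫ x, x⁻¹ ∂μ : ℝ) * I :=
    tendsto_nhds_unique hlim <| (tendsto_integral_inv_ofReal_sub_mul_I h).congr'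
      (eventually_nhdsWithin_of_forall hresolvent)
  have hre := congrArg Complex.re hinv
  rw [Complex.inv_re, Complex.re_ofReal_mul, Complex.I_re, mul_zero] at hre
  exact (div_pos hc (Complex.normSq_pos.2 hc0)).ne' hre

theorem stableExponent_one_of_nonneg (ρ : ℝ) {t : ℝ} (ht : 0 ≤ t) :
    stableExponent 1 ρ t = t * Complex.exp (I * π * (1 / 2 - ρ)) := by
  simp [stableExponent, ht, abs_of_nonneg ht]

/-- If `μ` is a probability measure on `ℝ` with characteristic
function `exp(−Ψ(z))`, where `Ψ` is the stable characteristic exponent with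
parameters `(1, ρ)`, `ρ ∈ (0,1)`, then `∫ |x|^{−1} dμ(x) = ∞`. -/
theorem cauchy_negative_moment_infinite
    (ρ : ℝ) (hρ : ρ ∈ Set.Ioo (0 : ℝ) 1)
    (μ : Measure ℝ) [IsProbabilityMeasure μ]
    (hchar : ∀ z : ℝ,
      ∫ x, Complex.exp (Complex.I * z * x) ∂μ = Complex.exp (-(stableExponent 1 ρ z))) :
    ∫⁻ x, (ENNReal.ofReal |x|)⁻¹ ∂μ = ⊤ := by
  set θ : ℝ := π * (1 / 2 - ρ)
  have hθ : Complex.exp (I * π * (1 / 2 - ρ)) = Complex.exp (θ * I) := by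
    push_cast [θ]; ring_nf
  refine lintegral_inv_abs_eq_top_of_charFun_eq_exp (c := Complex.exp (θ * I)) ?_ fun t ht => ?_
  · rw [Complex.exp_ofReal_mul_I_re]
    refine cos_pos_of_mem_Ioo ⟨?_, ?_⟩ <;> simp only [θ] <;> nlinarith [hρ.1, hρ.2, pi_pos]
  · rw [charFun_apply_real, ← hθ, ← stableExponent_one_of_nonneg ρ ht, ← hchar t]
    simp only [mul_comm, mul_left_comm]
end

section
/- Let α ∈ (0,2) and define F(w) = 2^α · Γ((α − iw)/2) · Γ((iw + 2)/2) / (Γ(−iw/2) · Γ((iw + 2 − α)/2)) for w ∈ ℂ, where Γ is the complex Gamma function. Then for every real z ≠ 0, F(z − i(α − 2)) = F(−z). (This expresses that the characteristic exponent of the Lévy process ξ° underlying the radial part of the planar stable process conditioned to absorb continuously at the origin equals that of −ξ.) -/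
open Complex

/-- Let `α ∈ (0,2)` and
`F(w) = 2^α Γ((α − iw)/2) Γ((iw + 2)/2) / (Γ(−iw/2) Γ((iw + 2 − α)/2))` for `w ∈ ℂ`.
Then for every real `z ≠ 0`, `F(z − i(α − 2)) = F(−z)`: the characteristic exponent of
the Lévy process `ξ°` underlying the radial part of the planar stable process
conditioned to absorb continuously at the origin equals that of `−ξ`. -/
theorem conditioned_radial_exponent_symmetry
    (α : ℝ) (hα : α ∈ Set.Ioo (0 : ℝ) 2)
    (F : ℂ → ℂ)
    (hF : ∀ w : ℂ,
      F w = (2 : ℂ) ^ (α : ℂ) * Complex.Gamma ((α - Complex.I * w) / 2)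
          * Complex.Gamma ((Complex.I * w + 2) / 2)
          / (Complex.Gamma (-(Complex.I * w) / 2)
            * Complex.Gamma ((Complex.I * w + 2 - α) / 2))) :
    ∀ z : ℝ, z ≠ 0 → F ((z : ℂ) - Complex.I * ((α : ℂ) - 2)) = F (-(z : ℂ)) := by
  intro z hz
  rw [hF, hF]
  have h1 : ((α : ℂ) - Complex.I * ((z : ℂ) - Complex.I * ((α : ℂ) - 2))) / 2
      = (Complex.I * (-(z : ℂ)) + 2) / 2 := by
    ring_nf; rw [Complex.I_sq]; ring
  have h2 : (Complex.I * ((z : ℂ) - Complex.I * ((α : ℂ) - 2)) + 2) / 2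
      = ((α : ℂ) - Complex.I * (-(z : ℂ))) / 2 := by
    ring_nf; rw [Complex.I_sq]; ring
  have h3 : (-(Complex.I * ((z : ℂ) - Complex.I * ((α : ℂ) - 2)))) / 2
      = (Complex.I * (-(z : ℂ)) + 2 - α) / 2 := by
    ring_nf; rw [Complex.I_sq]; ring
  have h4 : (Complex.I * ((z : ℂ) - Complex.I * ((α : ℂ) - 2)) + 2 - α) / 2
      = (-(Complex.I * (-(z : ℂ)))) / 2 := by
    ring_nf; rw [Complex.I_sq]; ring
  rw [h1, h2, h3, h4]
  ring
end

section
/- Let f : [0,∞) → (0,∞) be measurable and locally integrable with ∫_0^∞ f(u) du = ∞. Define H(t) = inf{s ≥ 0 : ∫_0^s f(u) du > t} for t ≥ 0, and η(t) = inf{s ≥ 0 : ∫_0^s f(H(r))^{−2} dr > t}. Then for every t with 0 ≤ t < ∫_0^∞ f(u)^{−1} du, one has H(η(t)) = inf{s ≥ 0 : ∫_0^s f(u)^{−1} du > t}. (Taking f = exp(αξ) this is the time-change identity H∘η_t = inf{s : ∫_0^s e^{−αξ_u} du > t} at the heart of the Riesz–Bogdan–Żak transform.) -/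
open MeasureTheory Filter Set
open scoped ENNReal

/-!
Let `F(x) = ∫₀ˣ f`. The hypotheses make `F` an increasing homeomorphism of `[0, ∞)` with
inverse `H`, and the substitution `r = F(u)`, `dr = f(u) du` (in measure form: `H` pushes
Lebesgue measure on `(0, ∞)` forward to `f(u) du`) turns `∫₀ˢ f(H r)⁻² dr` into
`∫₀^{H s} f(u)⁻¹ du`. So the set whose infimum is `η(t)` is the image under `F` of the set
whose infimum is the right-hand side; as `F` is continuous and increasing it commutes with
the infimum, whence `η(t) = F(rhs)` and `H(η(t)) = rhs`.
-/

theorem exists_lt_setLIntegral_Ioc_of_lt_setLIntegral_Ioi {h : ℝ → ℝ≥0∞} {a : ℝ}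
    {c : ℝ≥0∞} (hc : c < ∫⁻ u in Ioi a, h u) : ∃ x, a ≤ x ∧ c < ∫⁻ u in Ioc a x, h u := by
  have hIoi : ⋃ n : ℕ, Ioc a (a + n) = Ioi a :=
    iUnion_Ioc_eq_Ioi_self_iff.2 fun x _ =>
      (exists_nat_ge (x - a)).imp fun n hn => by linarith
  have hdir : Directed (· ⊆ ·) fun n : ℕ => Ioc a (a + n) :=
    Monotone.directed_le fun m n hmn => Ioc_subset_Ioc_right (by gcongr)
  rw [← hIoi, setLIntegral_iUnion_of_directed _ hdir] at hc
  obtain ⟨n, hn⟩ := lt_iSup_iff.1 hc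
  exact ⟨a + n, by simp, hn⟩

section GeneralizedInverse

variable {F H : ℝ → ℝ}

theorem invOn_Ici_of_eq_sInf_setOf_lt (hFc : Continuous F) (hF : StrictMonoOn F (Ici 0))
    (hF0 : F 0 = 0) (hFtop : ∀ M, ∃ x, 0 ≤ x ∧ M < F x)
    (hH : ∀ t, 0 ≤ t → H t = sInf {s | 0 ≤ s ∧ t < F s}) :
    InvOn H F (Ici 0) (Ici 0) := by
  have hHF : LeftInvOn H F (Ici 0) := by
    intro x (hx : 0 ≤ x)
    have hset : {s | 0 ≤ s ∧ F x < F s} = Ioi x := by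
      ext s
      exact ⟨fun ⟨hs, hlt⟩ => (hF.lt_iff_lt hx hs).1 hlt,
        fun (hs : x < s) => ⟨hx.trans hs.le, hF hx (hx.trans hs.le) hs⟩⟩
    rw [hH _ (hF0 ▸ hF.monotoneOn self_mem_Ici hx hx), hset, csInf_Ioi]
  refine ⟨hHF, fun t (ht : 0 ≤ t) => ?_⟩
  obtain ⟨y, hy, hty⟩ := hFtop t
  obtain ⟨x, hx, rfl⟩ := intermediate_value_Icc hy hFc.continuousOn ⟨by rwa [hF0], hty.le⟩
  rw [hHF hx.1]

theorem le_iff_le_of_invOn_Ici (hFm : Monotone F) (hF : StrictMonoOn F (Ici 0)) (hF0 : F 0 = 0)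
    (hinv : InvOn H F (Ici 0) (Ici 0)) (hH : MapsTo H (Ici 0) (Ici 0)) {r : ℝ} (hr : 0 < r)
    (b : ℝ) : H r ≤ b ↔ r ≤ F b := by
  rcases le_or_gt 0 b with hb | hb
  · conv_rhs => rw [← hinv.2 hr.le]
    exact (hF.le_iff_le (hH hr.le) hb).symm
  · have hHr : 0 ≤ H r := hH hr.le
    have hFb : F b ≤ 0 := hF0 ▸ hFm hb.le
    exact iff_of_false (by linarith) (by linarith)

theorem sInf_setOf_comp_eq_apply_sInf (hFm : Monotone F) (hFc : Continuous F)
    (hinv : InvOn H F (Ici 0) (Ici 0)) (hF : MapsTo F (Ici 0) (Ici 0))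
    (hH : MapsTo H (Ici 0) (Ici 0)) {P : ℝ → Prop} (hP : ∃ x, 0 ≤ x ∧ P x) :
    sInf {s | 0 ≤ s ∧ P (H s)} = F (sInf {x | 0 ≤ x ∧ P x}) := by
  have himage : {s | 0 ≤ s ∧ P (H s)} = F '' {x | 0 ≤ x ∧ P x} := by
    ext s
    constructor
    · rintro ⟨hs, hPs⟩
      exact ⟨H s, ⟨hH hs, hPs⟩, hinv.2 hs⟩
    · rintro ⟨x, ⟨hx, hPx⟩, rfl⟩
      exact ⟨hF hx, by rwa [hinv.1 hx]⟩
  rw [himage]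
  exact (hFm.map_csInf_of_continuousAt (A := {x | 0 ≤ x ∧ P x}) hFc.continuousAt hP
    ⟨0, fun x hx => hx.1⟩).symm

end GeneralizedInverse

/-- `x ↦ ∫₀ˣ f` on `[0, ∞)`, extended by `0` to `(-∞, 0]`, so that it is monotone on all of `ℝ`
when `f ≥ 0` on `(0, ∞)`. -/
noncomputable def halfLinePrimitive (f : ℝ → ℝ) (x : ℝ) : ℝ :=
  ∫ u in (0 : ℝ)..x, (Ioi 0).indicator f u

namespace halfLinePrimitive

variable {f : ℝ → ℝ}

@[simp]
theorem apply_zero (f : ℝ → ℝ) : halfLinePrimitive f 0 = 0 :=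
  intervalIntegral.integral_same

theorem apply_of_nonpos {x : ℝ} (hx : x ≤ 0) : halfLinePrimitive f x = 0 := by
  rw [halfLinePrimitive, intervalIntegral.integral_of_ge hx,
    setIntegral_eq_zero_of_forall_eq_zero fun u (hu : u ∈ Ioc x 0) =>
      indicator_of_notMem (s := Ioi 0) hu.2.not_gt f, neg_zero]

theorem nonneg (hf0 : ∀ u, 0 < u → 0 ≤ f u) (x : ℝ) : 0 ≤ halfLinePrimitive f x := by
  rcases le_total x 0 with hx | hx
  · exact (apply_of_nonpos hx).ge
  · exact intervalIntegral.integral_nonneg hx fun u _ => indicator_nonneg hf0 u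

theorem intervalIntegrable_indicator (hf : ∀ s, 0 ≤ s → IntegrableOn f (Ioc 0 s))
    (a b : ℝ) : IntervalIntegrable ((Ioi 0).indicator f) volume a b := by
  rw [intervalIntegrable_iff, integrableOn_indicator_iff measurableSet_Ioi]
  exact (hf _ (le_max_right (max a b) 0)).mono_set fun u (hu : u ∈ Ioi 0 ∩ uIoc a b) =>
    ⟨hu.1, hu.2.2.trans (le_max_left _ _)⟩

theorem sub_eq_intervalIntegral (hf : ∀ s, 0 ≤ s → IntegrableOn f (Ioc 0 s)) (a b : ℝ) :
    halfLinePrimitive f b - halfLinePrimitive f a = ∫ u in a..b, (Ioi 0).indicator f u :=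
  intervalIntegral.integral_interval_sub_left (intervalIntegrable_indicator hf 0 b)
    (intervalIntegrable_indicator hf 0 a)

theorem continuous (hf : ∀ s, 0 ≤ s → IntegrableOn f (Ioc 0 s)) :
    Continuous (halfLinePrimitive f) :=
  intervalIntegral.continuous_primitive (intervalIntegrable_indicator hf) 0

theorem monotone (hf : ∀ s, 0 ≤ s → IntegrableOn f (Ioc 0 s))
    (hf0 : ∀ u, 0 < u → 0 ≤ f u) : Monotone (halfLinePrimitive f) := fun a b hab =>
  sub_nonneg.1 <| (sub_eq_intervalIntegral hf a b).symm ▸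
    intervalIntegral.integral_nonneg hab fun u _ => indicator_nonneg hf0 u

theorem strictMonoOn (hf : ∀ s, 0 ≤ s → IntegrableOn f (Ioc 0 s))
    (hfpos : ∀ u, 0 < u → 0 < f u) : StrictMonoOn (halfLinePrimitive f) (Ici 0) :=
  fun a (ha : 0 ≤ a) b _ hab =>
    sub_pos.1 <| (sub_eq_intervalIntegral hf a b).symm ▸
      intervalIntegral.intervalIntegral_pos_of_pos_on (intervalIntegrable_indicator hf a b)
        (fun u hu => by
          rw [indicator_of_mem (mem_Ioi.2 (ha.trans_lt hu.1))]
          exact hfpos u (ha.trans_lt hu.1)) hab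

theorem ofReal_sub (hf : ∀ s, 0 ≤ s → IntegrableOn f (Ioc 0 s))
    (hf0 : ∀ u, 0 < u → 0 ≤ f u) {a b : ℝ} (hab : a ≤ b) :
    ENNReal.ofReal (halfLinePrimitive f b - halfLinePrimitive f a)
      = ∫⁻ u in Ioi 0 ∩ Ioc a b, ENNReal.ofReal (f u) := by
  rw [sub_eq_intervalIntegral hf, intervalIntegral.integral_of_le hab,
    ofReal_integral_eq_lintegral_ofReal (intervalIntegrable_indicator hf a b).1
      (ae_of_all _ (indicator_nonneg hf0)),
    ← setLIntegral_indicator measurableSet_Ioi]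
  exact lintegral_congr fun u => congrFun (indicator_comp_of_zero ENNReal.ofReal_zero).symm u

theorem ofReal_eq_setLIntegral (hf : ∀ s, 0 ≤ s → IntegrableOn f (Ioc 0 s))
    (hf0 : ∀ u, 0 < u → 0 ≤ f u) {x : ℝ} (hx : 0 ≤ x) :
    ENNReal.ofReal (halfLinePrimitive f x) = ∫⁻ u in Ioc 0 x, ENNReal.ofReal (f u) := by
  simpa [inter_eq_right.2 (Ioc_subset_Ioi_self : Ioc (0 : ℝ) x ⊆ Ioi 0)] using
    ofReal_sub hf hf0 hx

theorem exists_lt (hf : ∀ s, 0 ≤ s → IntegrableOn f (Ioc 0 s))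
    (hf0 : ∀ u, 0 < u → 0 ≤ f u) (htop : ∫⁻ u in Ioi 0, ENNReal.ofReal (f u) = ⊤) (M : ℝ) :
    ∃ x, 0 ≤ x ∧ M < halfLinePrimitive f x := by
  obtain ⟨x, hx, hMx⟩ := exists_lt_setLIntegral_Ioc_of_lt_setLIntegral_Ioi
    (htop ▸ ENNReal.ofReal_lt_top : ENNReal.ofReal M < ∫⁻ u in Ioi 0, ENNReal.ofReal (f u))
  rw [← ofReal_eq_setLIntegral hf hf0 hx] at hMx
  exact ⟨x, hx, (ENNReal.ofReal_lt_ofReal_iff'.1 hMx).1⟩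

theorem invOn_of_eq_sInf (hf : ∀ s, 0 ≤ s → IntegrableOn f (Ioc 0 s))
    (hfpos : ∀ u, 0 < u → 0 < f u) (htop : ∫⁻ u in Ioi 0, ENNReal.ofReal (f u) = ⊤)
    {H : ℝ → ℝ} (hH : ∀ t, H t
      = sInf {s | 0 ≤ s ∧ ENNReal.ofReal t < ∫⁻ u in Ioc 0 s, ENNReal.ofReal (f u)}) :
    InvOn H (halfLinePrimitive f) (Ici 0) (Ici 0) := by
  have hf0 : ∀ u, 0 < u → 0 ≤ f u := fun u hu => (hfpos u hu).le
  refine invOn_Ici_of_eq_sInf_setOf_lt (continuous hf) (strictMonoOn hf hfpos) (apply_zero f)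
    (exists_lt hf hf0 htop) fun t ht => ?_
  rw [hH]
  congr 1
  ext s
  exact and_congr_right fun hs => by
    rw [← ofReal_eq_setLIntegral hf hf0 hs, ENNReal.ofReal_lt_ofReal_iff_of_nonneg ht]

theorem le_iff_le_of_eq_sInf (hf : ∀ s, 0 ≤ s → IntegrableOn f (Ioc 0 s))
    (hfpos : ∀ u, 0 < u → 0 < f u) (htop : ∫⁻ u in Ioi 0, ENNReal.ofReal (f u) = ⊤)
    {H : ℝ → ℝ} (hH : ∀ t, H t
      = sInf {s | 0 ≤ s ∧ ENNReal.ofReal t < ∫⁻ u in Ioc 0 s, ENNReal.ofReal (f u)})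
    {r : ℝ} (hr : 0 < r) (b : ℝ) : H r ≤ b ↔ r ≤ halfLinePrimitive f b :=
  le_iff_le_of_invOn_Ici (monotone hf fun u hu => (hfpos u hu).le) (strictMonoOn hf hfpos)
    (apply_zero f) (invOn_of_eq_sInf hf hfpos htop hH)
    (fun t _ => (hH t).symm ▸ Real.sInf_nonneg fun _ hs => hs.1) hr b

end halfLinePrimitive

section ChangeOfVariables

variable {f H : ℝ → ℝ}

theorem aemeasurable_restrict_Ioi_of_le_iff_le {G : ℝ → ℝ}
    (hH : ∀ r, 0 < r → ∀ b, H r ≤ b ↔ r ≤ G b) : AEMeasurable H (volume.restrict (Ioi 0)) :=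
  aemeasurable_restrict_of_monotoneOn measurableSet_Ioi fun r hr r' hr' hrr' =>
    (hH r hr _).2 (hrr'.trans ((hH r' hr' _).1 le_rfl))

theorem map_volume_restrict_Ioi_eq_withDensity (hf : ∀ s, 0 ≤ s → IntegrableOn f (Ioc 0 s))
    (hf0 : ∀ u, 0 < u → 0 ≤ f u)
    (hH : ∀ r, 0 < r → ∀ b, H r ≤ b ↔ r ≤ halfLinePrimitive f b) :
    (volume.restrict (Ioi 0)).map H
      = (volume.restrict (Ioi 0)).withDensity fun u => ENNReal.ofReal (f u) := by
  have hHm := aemeasurable_restrict_Ioi_of_le_iff_le hH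
  have hpreimage : ∀ a b, H ⁻¹' Ioc a b ∩ Ioi 0
      = Ioc (halfLinePrimitive f a) (halfLinePrimitive f b) := by
    intro a b
    ext r
    simp only [mem_inter_iff, mem_preimage, mem_Ioc, mem_Ioi]
    constructor
    · rintro ⟨⟨ha, hb⟩, hr⟩
      exact ⟨lt_of_not_ge fun h => ha.not_ge ((hH r hr a).2 h), (hH r hr b).1 hb⟩
    · rintro ⟨ha, hb⟩
      have hr : 0 < r := (halfLinePrimitive.nonneg hf0 a).trans_lt ha
      exact ⟨⟨lt_of_not_ge fun h => ha.not_ge ((hH r hr a).1 h), (hH r hr b).2 hb⟩, hr⟩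
  have hmap : ∀ a b, (volume.restrict (Ioi 0)).map H (Ioc a b)
      = ENNReal.ofReal (halfLinePrimitive f b - halfLinePrimitive f a) := by
    intro a b
    rw [Measure.map_apply_of_aemeasurable hHm measurableSet_Ioc,
      Measure.restrict_apply' measurableSet_Ioi, hpreimage, Real.volume_Ioc]
  refine Measure.ext_of_Ioc' _ _ (fun a b _ => hmap a b ▸ ENNReal.ofReal_ne_top)
    fun a b hab => ?_
  rw [hmap, withDensity_apply _ measurableSet_Ioc, Measure.restrict_restrict measurableSet_Ioc,
    inter_comm, halfLinePrimitive.ofReal_sub hf hf0 hab.le]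

theorem setLIntegral_Ioc_comp_eq (hmeas : Measurable f)
    (hf : ∀ s, 0 ≤ s → IntegrableOn f (Ioc 0 s)) (hf0 : ∀ u, 0 < u → 0 ≤ f u)
    (hH : ∀ r, 0 < r → ∀ b, H r ≤ b ↔ r ≤ halfLinePrimitive f b)
    {s : ℝ} (hs : halfLinePrimitive f (H s) = s) {ψ : ℝ → ℝ≥0∞} (hψ : Measurable ψ) :
    ∫⁻ r in Ioc 0 s, ψ (H r) = ∫⁻ u in Ioc 0 (H s), ENNReal.ofReal (f u) * ψ u := by
  have hmem : ∀ r, 0 < r → (H r ∈ Ioc 0 (H s) ↔ r ∈ Ioc 0 s) := by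
    intro r hr
    rw [mem_Ioc, mem_Ioc, ← not_le, hH r hr, hH r hr, hs, halfLinePrimitive.apply_zero]
    exact and_congr_left' (iff_of_true hr.not_ge hr)
  calc ∫⁻ r in Ioc 0 s, ψ (H r)
      = ∫⁻ r in Ioi 0, (Ioc 0 s).indicator (ψ ∘ H) r := by
        rw [setLIntegral_indicator measurableSet_Ioc,
          inter_eq_left.2 (Ioc_subset_Ioi_self : Ioc (0 : ℝ) s ⊆ Ioi 0)]
        rfl
    _ = ∫⁻ r in Ioi 0, (Ioc 0 (H s)).indicator ψ (H r) :=
        setLIntegral_congr_fun measurableSet_Ioi fun r (hr : 0 < r) => by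
          simp only [indicator_apply, hmem r hr, Function.comp_apply]
    _ = ∫⁻ u, (Ioc 0 (H s)).indicator ψ u ∂(volume.restrict (Ioi 0)).map H :=
        (lintegral_map' (hψ.indicator measurableSet_Ioc).aemeasurable
          (aemeasurable_restrict_Ioi_of_le_iff_le hH)).symm
    _ = ∫⁻ u in Ioc 0 (H s), ENNReal.ofReal (f u) * ψ u := by
        rw [map_volume_restrict_Ioi_eq_withDensity hf hf0 hH,
          lintegral_withDensity_eq_lintegral_mul _ hmeas.ennreal_ofReal
            (hψ.indicator measurableSet_Ioc)]
        refine (lintegral_congr fun u =>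
          (indicator_mul_right (Ioc 0 (H s)) (fun u => ENNReal.ofReal (f u)) ψ).symm).trans ?_
        rw [setLIntegral_indicator measurableSet_Ioc,
          inter_eq_left.2 (Ioc_subset_Ioi_self : Ioc (0 : ℝ) (H s) ⊆ Ioi 0)]

theorem setLIntegral_Ioc_inv_sq_comp_eq (hmeas : Measurable f)
    (hf : ∀ s, 0 ≤ s → IntegrableOn f (Ioc 0 s)) (hfpos : ∀ u, 0 < u → 0 < f u)
    (hH : ∀ r, 0 < r → ∀ b, H r ≤ b ↔ r ≤ halfLinePrimitive f b)
    {s : ℝ} (hs : halfLinePrimitive f (H s) = s) :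
    ∫⁻ r in Ioc 0 s, ENNReal.ofReal ((f (H r) ^ 2)⁻¹)
      = ∫⁻ u in Ioc 0 (H s), ENNReal.ofReal (f u)⁻¹ := by
  rw [setLIntegral_Ioc_comp_eq (ψ := fun u => ENNReal.ofReal ((f u ^ 2)⁻¹)) hmeas hf
    (fun u hu => (hfpos u hu).le) hH hs (by fun_prop)]
  refine setLIntegral_congr_fun measurableSet_Ioc fun u hu => ?_
  have hfu : 0 < f u := hfpos u hu.1
  rw [← ENNReal.ofReal_mul hfu.le]
  field_simp

end ChangeOfVariables

/-- Let `f : [0,∞) → (0,∞)` be measurable and locally integrable with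
`∫_0^∞ f = ∞`. With `H(t) = inf{s ≥ 0 : ∫_0^s f > t}` and
`η(t) = inf{s ≥ 0 : ∫_0^s f(H(r))^{−2} dr > t}`, for every `t` with
`0 ≤ t < ∫_0^∞ f(u)^{−1} du` one has `H(η(t)) = inf{s ≥ 0 : ∫_0^s f(u)^{−1} du > t}`.
(The time-change identity at the heart of the Riesz–Bogdan–Żak transform.) -/
theorem riesz_bogdan_zak_time_change
    (f : ℝ → ℝ) (hmeas : Measurable f)
    (hpos : ∀ u : ℝ, 0 ≤ u → 0 < f u)
    (hloc : ∀ s : ℝ, 0 ≤ s → ∫⁻ u in Set.Ioc 0 s, ENNReal.ofReal (f u) < ⊤)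
    (htot : ∫⁻ u in Set.Ioi (0 : ℝ), ENNReal.ofReal (f u) = ⊤)
    (H : ℝ → ℝ)
    (hH : ∀ t : ℝ, H t
      = sInf {s : ℝ | 0 ≤ s ∧
          ENNReal.ofReal t < ∫⁻ u in Set.Ioc 0 s, ENNReal.ofReal (f u)})
    (η : ℝ → ℝ)
    (hη : ∀ t : ℝ, η t
      = sInf {s : ℝ | 0 ≤ s ∧
          ENNReal.ofReal t < ∫⁻ r in Set.Ioc 0 s, ENNReal.ofReal ((f (H r) ^ 2)⁻¹)}) :
    ∀ t : ℝ, 0 ≤ t →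
      ENNReal.ofReal t < ∫⁻ u in Set.Ioi (0 : ℝ), ENNReal.ofReal (f u)⁻¹ →
      H (η t)
        = sInf {s : ℝ | 0 ≤ s ∧
            ENNReal.ofReal t < ∫⁻ u in Set.Ioc 0 s, ENNReal.ofReal (f u)⁻¹} := by
  intro t _ htlt
  have hfpos : ∀ u, 0 < u → 0 < f u := fun u hu => hpos u hu.le
  have hf0 : ∀ u, 0 < u → 0 ≤ f u := fun u hu => (hfpos u hu).le
  have hf : ∀ s, 0 ≤ s → IntegrableOn f (Ioc 0 s) := fun s hs =>
    (lintegral_ofReal_ne_top_iff_integrable hmeas.aestronglyMeasurable.restrict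
      (ae_restrict_of_forall_mem measurableSet_Ioc fun u hu => hf0 u hu.1)).1 (hloc s hs).ne
  have hinv := halfLinePrimitive.invOn_of_eq_sInf hf hfpos htot hH
  have hHnonneg : MapsTo H (Ici 0) (Ici 0) := fun t _ =>
    (hH t).symm ▸ Real.sInf_nonneg fun _ hs => hs.1
  have hηset :
      {s | 0 ≤ s ∧ ENNReal.ofReal t < ∫⁻ r in Ioc 0 s, ENNReal.ofReal ((f (H r) ^ 2)⁻¹)}
        = {s | 0 ≤ s ∧ ENNReal.ofReal t < ∫⁻ u in Ioc 0 (H s), ENNReal.ofReal (f u)⁻¹} := by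
    ext s
    exact and_congr_right fun hs => by
      rw [setLIntegral_Ioc_inv_sq_comp_eq hmeas hf hfpos
        (fun r hr => halfLinePrimitive.le_iff_le_of_eq_sInf hf hfpos htot hH hr) (hinv.2 hs)]
  rw [hη, hηset, sInf_setOf_comp_eq_apply_sInf (halfLinePrimitive.monotone hf hf0)
      (halfLinePrimitive.continuous hf) hinv (fun x _ => halfLinePrimitive.nonneg hf0 x)
      hHnonneg
      (P := fun x => ENNReal.ofReal t < ∫⁻ u in Ioc 0 x, ENNReal.ofReal (f u)⁻¹)
      (exists_lt_setLIntegral_Ioc_of_lt_setLIntegral_Ioi htlt),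
    hinv.1 (Real.sInf_nonneg fun _ hx => hx.1)]
end

section
/- Let α > 0 and let ξ : [0,∞) → ℝ be measurable with u ↦ exp(αξ_u) locally integrable and τ := ∫_0^∞ exp(αξ_u) du < ∞. Define H(t) = inf{s ≥ 0 : ∫_0^s exp(αξ_u) du > t} and X_t = exp(ξ_{H(t)}) for 0 ≤ t < τ. Then for every s ∈ (0, τ): H(τ − s) = ∫_s^{τ} X_{τ−u}^{−α} du = ∫_{−log τ}^{−log s} (e^{v/α} X_{τ − e^{−v}})^{−α} dv. (This is the reversed-clock identity φ°_s = ∫_{−log τ°}^{−log s} |X̃°_v|^{−α} dv used to analyse windings into the origin.) -/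
/-! The clock `A(s) = ∫₀ˢ f` with `f = exp (α ξ) > 0` is a continuous strictly increasing
bijection `[0, ∞) → [0, τ)`, and `H` is its inverse. Hence `H` pushes Lebesgue measure on
`(0, t]` forward to `f(s) ds` on `(0, H t]`, which gives `H t = ∫₀ᵗ dr / f (H r)` without any
differentiability of `H`. Both identities are this formula at `t = τ - s`, after the
substitutions `r = τ - u` and then `u = e^{-v}`. -/

open MeasureTheory Filter Set Real Topology

noncomputable def clock (f : ℝ → ℝ) (s : ℝ) : ℝ := ∫ u in Ioc 0 s, f u

-- For `t ≥ ∫ u in Ioi 0, f u` the set is empty and the value is the junk `sInf ∅ = 0`.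
noncomputable def clockInverse (f : ℝ → ℝ) (t : ℝ) : ℝ := sInf {s | 0 ≤ s ∧ t < clock f s}

section Clock

variable {f : ℝ → ℝ}

theorem clock_of_nonpos {s : ℝ} (hs : s ≤ 0) : clock f s = 0 := by
  simp [clock, Ioc_eq_empty (not_lt.2 hs)]

theorem clock_monotone (hf_nonneg : ∀ x, 0 ≤ f x) (hf : IntegrableOn f (Ioi 0)) :
    Monotone (clock f) := fun _ _ hab =>
  setIntegral_mono_set (hf.mono_set Ioc_subset_Ioi_self) (Eventually.of_forall hf_nonneg) (Ioc_subset_Ioc_right hab).eventuallyLE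

theorem clock_strictMonoOn (hf_pos : ∀ x, 0 < f x) (hf : IntegrableOn f (Ioi 0)) :
    StrictMonoOn (clock f) (Ici 0) := by
  intro a ha b _ hab
  have hint : IntegrableOn f (Ioc a b) := hf.mono_set fun x hx => lt_of_le_of_lt ha hx.1
  have hpos : 0 < ∫ u in Ioc a b, f u := by
    rw [setIntegral_pos_iff_support_of_nonneg_ae (Eventually.of_forall fun x => (hf_pos x).le)
      hint, Function.support_eq_univ fun x => (hf_pos x).ne', univ_inter, Real.volume_Ioc]
    simpa using hab
  have hsplit : clock f b = clock f a + ∫ u in Ioc a b, f u := by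
    rw [clock, clock, ← setIntegral_union (Ioc_disjoint_Ioc_of_le le_rfl) measurableSet_Ioc
      (hf.mono_set Ioc_subset_Ioi_self) hint, Ioc_union_Ioc_eq_Ioc ha hab.le]
  linarith

theorem clock_continuousOn (hf : IntegrableOn f (Ioi 0)) : ContinuousOn (clock f) (Ici 0) := by
  intro x hx
  have hIcc : ContinuousOn (clock f) (Icc 0 (x + 1)) :=
    intervalIntegral.continuousOn_primitive <|
      (integrableOn_Icc_iff_integrableOn_Ioc).2 (hf.mono_set Ioc_subset_Ioi_self)
  refine (hIcc x ⟨hx, by linarith⟩).mono_of_mem_nhdsWithin ?_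
  exact mem_nhdsWithin.2 ⟨Iio (x + 1), isOpen_Iio, by simp, fun y hy => ⟨hy.2, hy.1.le⟩⟩

theorem tendsto_clock_atTop (hf : IntegrableOn f (Ioi 0)) :
    Tendsto (clock f) atTop (𝓝 (∫ u in Ioi 0, f u)) := by
  refine (intervalIntegral_tendsto_integral_Ioi 0 hf tendsto_id).congr' ?_
  filter_upwards [eventually_ge_atTop 0] with s hs
  exact intervalIntegral.integral_of_le hs

theorem Ioo_subset_image_clock (hf : IntegrableOn f (Ioi 0)) :
    Ioo 0 (∫ u in Ioi 0, f u) ⊆ clock f '' Ici 0 := by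
  have h0 : Tendsto (clock f) (𝓝[≥] 0) (𝓝 0) := by
    simpa [clock_of_nonpos le_rfl] using (clock_continuousOn hf 0 self_mem_Ici).tendsto
  exact isPreconnected_Ici.intermediate_value_Ioo (l₁ := 𝓝[≥] 0) inf_le_right
    (le_principal_iff.2 (Ici_mem_atTop 0)) (clock_continuousOn hf) h0 (tendsto_clock_atTop hf)

theorem clockInverse_clock (hf_pos : ∀ x, 0 < f x) (hf : IntegrableOn f (Ioi 0)) {c : ℝ}
    (hc : 0 ≤ c) : clockInverse f (clock f c) = c := by
  have : {s | 0 ≤ s ∧ clock f c < clock f s} = Ioi c := by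
    ext s
    refine ⟨fun hs => (clock_strictMonoOn hf_pos hf).lt_iff_lt hc hs.1 |>.1 hs.2, fun hs => ?_⟩
    have hs0 : 0 ≤ s := hc.trans hs.le
    exact ⟨hs0, (clock_strictMonoOn hf_pos hf) hc hs0 hs⟩
  rw [clockInverse, this, csInf_Ioi]

theorem clockInverse_le_iff (hf_pos : ∀ x, 0 < f x) (hf : IntegrableOn f (Ioi 0)) {t : ℝ}
    (ht : t ∈ Ioo 0 (∫ u in Ioi 0, f u)) (b : ℝ) : clockInverse f t ≤ b ↔ t ≤ clock f b := by
  obtain ⟨c, hc, rfl⟩ := Ioo_subset_image_clock hf ht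
  rw [clockInverse_clock hf_pos hf hc]
  rcases le_or_gt 0 b with hb | hb
  · exact ((clock_strictMonoOn hf_pos hf).le_iff_le hc hb).symm
  · rw [clock_of_nonpos hb.le]
    exact iff_of_false (not_le.2 (hb.trans_le hc)) (not_le.2 ht.1)

theorem clock_clockInverse (hf_pos : ∀ x, 0 < f x) (hf : IntegrableOn f (Ioi 0)) {t : ℝ}
    (ht : t ∈ Ioo 0 (∫ u in Ioi 0, f u)) : clock f (clockInverse f t) = t := by
  obtain ⟨c, hc, rfl⟩ := Ioo_subset_image_clock hf ht
  rw [clockInverse_clock hf_pos hf hc]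

theorem clockInverse_nonneg (hf_pos : ∀ x, 0 < f x) (hf : IntegrableOn f (Ioi 0)) {t : ℝ}
    (ht : t ∈ Ioo 0 (∫ u in Ioi 0, f u)) : 0 ≤ clockInverse f t := by
  obtain ⟨c, hc, rfl⟩ := Ioo_subset_image_clock hf ht
  rwa [clockInverse_clock hf_pos hf hc]

theorem monotoneOn_clockInverse (hf_pos : ∀ x, 0 < f x) (hf : IntegrableOn f (Ioi 0)) :
    MonotoneOn (clockInverse f) (Ioo 0 (∫ u in Ioi 0, f u)) := fun _ hr _ hr' hrr' =>
  (clockInverse_le_iff hf_pos hf hr _).2 <| hrr'.trans (clock_clockInverse hf_pos hf hr').ge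

theorem aemeasurable_clockInverse (hf_pos : ∀ x, 0 < f x) (hf : IntegrableOn f (Ioi 0)) {t : ℝ}
    (ht : t < ∫ u in Ioi 0, f u) : AEMeasurable (clockInverse f) (volume.restrict (Ioc 0 t)) :=
  aemeasurable_restrict_of_monotoneOn measurableSet_Ioc <|
    (monotoneOn_clockInverse hf_pos hf).mono fun _ hr => ⟨hr.1, hr.2.trans_lt ht⟩

theorem map_clockInverse (hf_pos : ∀ x, 0 < f x) (hf : IntegrableOn f (Ioi 0)) {t : ℝ}
    (ht : t ∈ Ioo 0 (∫ u in Ioi 0, f u)) :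
    (volume.restrict (Ioc 0 t)).map (clockInverse f)
      = (volume.restrict (Ioc 0 (clockInverse f t))).withDensity
          (fun s => ENNReal.ofReal (f s)) := by
  have hsub : Ioc 0 t ⊆ Ioo 0 (∫ u in Ioi 0, f u) := fun r hr => ⟨hr.1, hr.2.trans_lt ht.2⟩
  refine Measure.ext_of_Iic _ _ fun b => ?_
  have hpre : clockInverse f ⁻¹' Iic b ∩ Ioc 0 t = Ioc 0 (min t (clock f b)) := by
    ext r
    simp only [mem_inter_iff, mem_preimage, mem_Iic, mem_Ioc, le_min_iff]
    constructor
    · rintro ⟨hb, hr⟩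
      exact ⟨hr.1, hr.2, (clockInverse_le_iff hf_pos hf (hsub hr) b).1 hb⟩
    · rintro ⟨h0, hrt, hb⟩
      exact ⟨(clockInverse_le_iff hf_pos hf (hsub ⟨h0, hrt⟩) b).2 hb, h0, hrt⟩
  have hdom : Iic b ∩ Ioc 0 (clockInverse f t) = Ioc 0 (min b (clockInverse f t)) := by
    ext r; simp only [mem_inter_iff, mem_Iic, mem_Ioc, le_min_iff]; tauto
  rw [Measure.map_apply_of_aemeasurable (aemeasurable_clockInverse hf_pos hf ht.2)
      measurableSet_Iic, Measure.restrict_apply' measurableSet_Ioc, hpre, Real.volume_Ioc,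
    withDensity_apply _ measurableSet_Iic, Measure.restrict_restrict' measurableSet_Ioc, hdom,
    ← ofReal_integral_eq_lintegral_ofReal (hf.mono_set Ioc_subset_Ioi_self)
    (Eventually.of_forall fun x => (hf_pos x).le)]
  change _ = ENNReal.ofReal (clock f _)
  rw [(clock_monotone (fun x => (hf_pos x).le) hf).map_min, clock_clockInverse hf_pos hf ht, sub_zero, min_comm]

theorem clockInverse_eq_integral (hf_meas : Measurable f) (hf_pos : ∀ x, 0 < f x)
    (hf : IntegrableOn f (Ioi 0)) {t : ℝ} (ht : t ∈ Ioo 0 (∫ u in Ioi 0, f u)) :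
    clockInverse f t = ∫ r in Ioc 0 t, (f (clockInverse f r))⁻¹ := by
  calc clockInverse f t = ∫ s in Ioc 0 (clockInverse f t), (1 : ℝ) := by
        simp [clockInverse_nonneg hf_pos hf ht]
    _ = ∫ s in Ioc 0 (clockInverse f t), (ENNReal.ofReal (f s)).toReal • (f s)⁻¹ := by
        refine setIntegral_congr_fun measurableSet_Ioc fun s _ => ?_
        rw [ENNReal.toReal_ofReal (hf_pos s).le, smul_eq_mul, mul_inv_cancel₀ (hf_pos s).ne']
    _ = ∫ s, (f s)⁻¹ ∂(volume.restrict (Ioc 0 t)).map (clockInverse f) := by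
        rw [map_clockInverse hf_pos hf ht, integral_withDensity_eq_integral_toReal_smul
          hf_meas.ennreal_ofReal (Eventually.of_forall fun _ => ENNReal.ofReal_lt_top)]
    _ = ∫ r in Ioc 0 t, (f (clockInverse f r))⁻¹ :=
        integral_map (aemeasurable_clockInverse hf_pos hf ht.2) hf_meas.inv.aestronglyMeasurable

end Clock

theorem integral_Ioc_comp_exp_neg {E : Type*} [NormedAddCommGroup E] [NormedSpace ℝ E]
    (g : ℝ → E) {a b : ℝ} (ha : 0 < a) (hb : 0 < b) :
    ∫ v in Ioc (-log b) (-log a), exp (-v) • g (exp (-v)) = ∫ u in Ioc a b, g u := by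
  have himage : (fun v => exp (-v)) '' Ioc (-log b) (-log a) = Ico a b := by
    rw [show (fun v => exp (-v)) = exp ∘ Neg.neg from rfl, image_comp, image_neg_Ioc, neg_neg,
      neg_neg, image_exp_Ico, exp_log ha, exp_log hb]
  have hderiv : ∀ v ∈ Ioc (-log b) (-log a),
      HasDerivWithinAt (fun v => exp (-v)) (-exp (-v)) (Ioc (-log b) (-log a)) v := fun v _ =>
    by simpa using ((hasDerivAt_neg v).exp).hasDerivWithinAt
  symm
  rw [integral_Ioc_eq_integral_Ioo, ← integral_Ico_eq_integral_Ioo, ← himage,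
    integral_image_eq_integral_abs_deriv_smul measurableSet_Ioc hderiv
      (exp_injective.comp neg_injective).injOn]
  simp only [abs_neg, abs_of_pos (exp_pos _)]

/-- Let `α > 0` and `ξ : [0,∞) → ℝ` be measurable with
`u ↦ exp(αξ_u)` locally integrable and `τ := ∫_0^∞ exp(αξ_u) du < ∞`. With
`H(t) = inf{s ≥ 0 : ∫_0^s exp(αξ_u) du > t}` and `X_t = exp(ξ_{H(t)})`, for every
`s ∈ (0, τ)`:
`H(τ − s) = ∫_s^τ X_{τ−u}^{−α} du = ∫_{−log τ}^{−log s} (e^{v/α} X_{τ−e^{−v}})^{−α} dv`.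
(The reversed-clock identity used to analyse windings into the origin.) -/
theorem reversed_clock_identity
    (α : ℝ) (hα : 0 < α) (ξ : ℝ → ℝ) (hmeas : Measurable ξ)
    (hint : IntegrableOn (fun u => Real.exp (α * ξ u)) (Set.Ioi 0) volume)
    (τ : ℝ) (hτ : τ = ∫ u in Set.Ioi (0 : ℝ), Real.exp (α * ξ u))
    (H : ℝ → ℝ)
    (hH : ∀ t : ℝ, H t
      = sInf {s : ℝ | 0 ≤ s ∧ t < ∫ u in Set.Ioc 0 s, Real.exp (α * ξ u)})
    (X : ℝ → ℝ) (hX : ∀ t : ℝ, X t = Real.exp (ξ (H t))) :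
    ∀ s : ℝ, s ∈ Set.Ioo 0 τ →
      H (τ - s) = (∫ u in Set.Ioc s τ, (X (τ - u)) ^ (-α)) ∧
      H (τ - s) = ∫ v in Set.Ioc (-Real.log τ) (-Real.log s),
          (Real.exp (v / α) * X (τ - Real.exp (-v))) ^ (-α) := by
  intro s hs
  have hH' : H = clockInverse fun u => exp (α * ξ u) := funext hH
  have hXα : ∀ r, X r ^ (-α) = (exp (α * ξ (H r)))⁻¹ := fun r => by
    rw [hX, ← exp_mul, ← exp_neg, mul_neg, mul_comm]
  have hclock : H (τ - s) = ∫ u in Ioc s τ, X (τ - u) ^ (-α) := by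
    have hts : τ - s ∈ Ioo 0 (∫ u in Ioi 0, exp (α * ξ u)) := by
      constructor <;> linarith [hs.1, hs.2]
    rw [hH', clockInverse_eq_integral (hmeas.const_mul α).exp (fun _ => exp_pos _) hint hts,
      ← intervalIntegral.integral_of_le hts.1.le, ← intervalIntegral.integral_of_le hs.2.le]
    simp only [hXα, hH', sub_self,
      intervalIntegral.integral_comp_sub_left fun r => (exp (α * ξ _))⁻¹]
  refine ⟨hclock, hclock.trans ?_⟩
  rw [← integral_Ioc_comp_exp_neg _ hs.1 (hs.1.trans hs.2)]
  refine setIntegral_congr_fun measurableSet_Ioc fun v _ => ?_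
  rw [mul_rpow (exp_pos _).le (by rw [hX]; positivity), ← exp_mul, smul_eq_mul,
    mul_neg, div_mul_cancel₀ v hα.ne']
end
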